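/- Let C be an F_q-linear subspace of F_q^m × (F_q^k × F_q^{n−k}) × F_q^m of dimension m + k (as arises from a systematic convolutional encoder, where the first k output coordinates are information symbols and the last n−k are parity symbols), and let Ĉ be its twisted dual constraint code (for which the last n−k output coordinates are information symbols and the first k are parity symbols). Define the input-parity weight adjacency matrix Λ_C(x_I,y_I,x_P,y_P) as the matrix indexed by F_q^m × F_q^m whose (w,w') entry is Σ_{(p₁,p₂) with (w,(p₁,p₂),w') ∈ C} x_I^{k−wt(p₁)} y_I^{wt(p₁)} x_P^{(n−k)−wt(p₂)} y_P^{wt(p₂)}, and define Λ_Ĉ(x_I,y_I,x_P,y_P) as the matrix whose (w,w') entry is Σ_{(p₁,p₂) with (w,(p₁,p₂),w') ∈ Ĉ} x_P^{k−wt(p₁)} y_P^{wt(p₁)} x_I^{(n−k)−wt(p₂)} y_I^{wt(p₂)}. Then for all complex x_I, y_I, x_P, y_P: Λ_Ĉ(x_I,y_I,x_P,y_P) = q^{−(m+k)} · F_m · Λ_C(x_P+(q−1)y_P, x_P−y_P, x_I+(q−1)y_I, x_I−y_I) · F_m†. -/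

import Mathlib

/-!
Let `ψ(x) = ω^{tr x}`, a primitive additive character of `F_q`. For a single vector `t`,
`∑_v ψ(v·t) X^{l-wt v} Y^{wt v} = (X+(q-1)Y)^{l-wt t} (X-Y)^{wt t}`, coordinate by coordinate.
Using this on the two output blocks of each `c ∈ C`, the `(w,w')` entry of `F Λ_C(…) F†` becomes
`∑_{c ∈ C} ∑_v ψ(⟨v, c⟩) · (weight monomial of v)` with `v = (w, (p₁, p₂), w')` and `⟨·,·⟩` the
twisted pairing defining `Ĉ`. The inner sum over the subspace `C` is `|C| = q^{m+k}` when
`⟨v, ·⟩` vanishes on `C`, i.e. `v ∈ Ĉ`, and `0` otherwise.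
-/

open scoped Classical
open Matrix

noncomputable section

variable (p : ℕ) [Fact p.Prime] (F : Type) [Field F] [Fintype F] [Algebra (ZMod p) F]

/-- Hamming weight of a vector. -/
def wt {n : ℕ} (v : Fin n → F) : ℕ := (Finset.univ.filter fun i => v i ≠ 0).card

/-- The twisted dual constraint code
`Ĉ = {(w,p,w') : w·w₀ + p·p₀ − w'·w₁ = 0 for all (w₀,p₀,w₁) ∈ C}`, where the
output block is split into an information block and a parity block. -/
def twistedDual {m k r : ℕ}
    (C : Set ((Fin m → F) × ((Fin k → F) × (Fin r → F)) × (Fin m → F))) :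
    Set ((Fin m → F) × ((Fin k → F) × (Fin r → F)) × (Fin m → F)) :=
  {v | ∀ c ∈ C, (∑ i, v.1 i * c.1 i) + ((∑ i, v.2.1.1 i * c.2.1.1 i)
      + (∑ i, v.2.1.2 i * c.2.1.2 i)) - (∑ i, v.2.2 i * c.2.2 i) = 0}

/-- Input-parity weight adjacency matrix of `S`, with the first output block
(of length `k`) as information block and the second (of length `r = n−k`) as
parity block. -/
def IPWAM {m k r : ℕ}
    (S : Set ((Fin m → F) × ((Fin k → F) × (Fin r → F)) × (Fin m → F)))
    (xI yI xP yP : ℂ) : Matrix (Fin m → F) (Fin m → F) ℂ := fun w w' =>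
  ∑ pv : (Fin k → F) × (Fin r → F), if (w, pv, w') ∈ S then
    xI ^ (k - wt F pv.1) * yI ^ wt F pv.1 * xP ^ (r - wt F pv.2) * yP ^ wt F pv.2
  else 0

/-- The Fourier matrix `F_m` with `(a,b)` entry `ω^{tr(a·b)}`. -/
def FourierMat (m : ℕ) : Matrix (Fin m → F) (Fin m → F) ℂ := fun a b =>
  Complex.exp (2 * Real.pi * Complex.I / p) ^
    (Algebra.trace (ZMod p) F (∑ i, a i * b i)).val

lemma AddChar.map_sum_eq_prod {ι A M : Type*} [AddCommMonoid A] [CommMonoid M]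
    (ψ : AddChar A M) (s : Finset ι) (f : ι → A) :
    ψ (∑ i ∈ s, f i) = ∏ i ∈ s, ψ (f i) := by
  induction s using Finset.cons_induction with
  | empty => simp
  | cons a s ha ih => rw [Finset.sum_cons, Finset.prod_cons, AddChar.map_add_eq_mul, ih]

lemma prod_ite_eq_zero_eq_pow_wt {K : Type} [Field K] {l : ℕ} (v : Fin l → K) (X Y : ℂ) :
    (∏ i, if v i = 0 then X else Y) = X ^ (l - wt K v) * Y ^ wt K v := by
  have hzeros : (Finset.univ.filter fun i => v i = 0).card = l - wt K v := by
    have hcard := Finset.card_filter_add_card_filter_not (s := Finset.univ) (fun i => v i = 0)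
    rw [Finset.card_univ, Fintype.card_fin] at hcard
    simp only [wt, ne_eq]
    omega
  rw [Finset.prod_ite, Finset.prod_const, Finset.prod_const, hzeros, wt]

section CharacterSums

variable {K : Type} [Field K] [Fintype K] {ψ : AddChar K ℂ}

lemma sum_addChar_mul_mul_ite_eq_zero (hψ : ψ.IsPrimitive) (t : K) (X Y : ℂ) :
    ∑ s, ψ (s * t) * (if s = 0 then X else Y)
      = if t = 0 then X + ((Fintype.card K : ℂ) - 1) * Y else X - Y := by
  have hsplit : ∀ s : K, ψ (s * t) * (if s = 0 then X else Y)
      = ψ (s * t) * Y + if s = 0 then X - Y else 0 := by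
    intro s
    split_ifs with hs
    · simp [hs]
    · ring
  simp_rw [hsplit, Finset.sum_add_distrib, ← Finset.sum_mul, AddChar.sum_mulShift t hψ,
    Finset.sum_ite_eq', Finset.mem_univ, if_true]
  split_ifs <;> push_cast <;> ring

lemma sum_addChar_dotProduct_mul_pow_wt (hψ : ψ.IsPrimitive) {l : ℕ} (t : Fin l → K)
    (X Y : ℂ) :
    ∑ v : Fin l → K, ψ (v ⬝ᵥ t) * (X ^ (l - wt K v) * Y ^ wt K v)
      = (X + ((Fintype.card K : ℂ) - 1) * Y) ^ (l - wt K t) * (X - Y) ^ wt K t := by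
  simp_rw [← prod_ite_eq_zero_eq_pow_wt, ← sum_addChar_mul_mul_ite_eq_zero hψ, Fintype.prod_sum,
    dotProduct, AddChar.map_sum_eq_prod, ← Finset.prod_mul_distrib]

lemma sum_addChar_linearMap_submodule (hψ : ψ.IsPrimitive) {V : Type*} [AddCommGroup V]
    [Module K V] [Fintype V] (W : Submodule K V) (f : V →ₗ[K] K) :
    ∑ x ∈ Finset.univ.filter (· ∈ W), ψ (f x)
      = if ∀ x ∈ W, f x = 0 then (Fintype.card K : ℂ) ^ Module.finrank K W else 0 := by
  rw [Finset.sum_subtype (p := (· ∈ W)) _ (fun x => by simp)]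
  set χ := ψ.compAddMonoidHom (f.domRestrict W).toAddMonoidHom
  have hχ : χ = 0 ↔ ∀ x ∈ W, f x = 0 := by
    refine ⟨fun h x hx => by_contra fun hfx => hψ hfx ?_, fun h => ?_⟩
    · ext s
      have hsx := DFunLike.congr_fun h (s • ⟨x, hx⟩)
      simp only [χ, AddChar.compAddMonoidHom_apply] at hsx
      simpa [mul_comm] using hsx
    · ext ⟨x, hx⟩
      simp [χ, h x hx]
  calc ∑ x : W, ψ (f x) = ∑ x, χ x := rfl
    _ = _ := by
      rw [AddChar.sum_eq_ite]
      exact if_congr hχ (by rw [Module.card_eq_pow_finrank (K := K)]; push_cast; rfl) rfl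

end CharacterSums

abbrev ConstraintSpace (K : Type) (m k r : ℕ) : Type :=
  (Fin m → K) × ((Fin k → K) × (Fin r → K)) × (Fin m → K)

section ConstraintCodes

variable {K : Type} [Field K] {m k r : ℕ}

def twistedPairing (v : ConstraintSpace K m k r) : ConstraintSpace K m k r →ₗ[K] K where
  toFun c := v.1 ⬝ᵥ c.1 + (v.2.1.1 ⬝ᵥ c.2.1.1 + v.2.1.2 ⬝ᵥ c.2.1.2) - v.2.2 ⬝ᵥ c.2.2
  map_add' c d := by
    simp only [Prod.fst_add, Prod.snd_add, dotProduct_add]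
    ring
  map_smul' t c := by
    simp only [Prod.smul_fst, Prod.smul_snd, dotProduct_smul, smul_eq_mul, RingHom.id_apply]
    ring

lemma mem_twistedDual_iff (S : Set (ConstraintSpace K m k r)) (v : ConstraintSpace K m k r) :
    v ∈ twistedDual K S ↔ ∀ c ∈ S, twistedPairing v c = 0 :=
  Iff.rfl

lemma mul_IPWAM_mul_apply [Fintype K] {ι κ : Type*} (A : Matrix ι (Fin m → K) ℂ)
    (B : Matrix (Fin m → K) κ ℂ) (S : Set (ConstraintSpace K m k r)) (xI yI xP yP : ℂ)
    (i : ι) (j : κ) :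
    (A * IPWAM K S xI yI xP yP * B) i j = ∑ c ∈ Finset.univ.filter (· ∈ S),
      A i c.1 * (xI ^ (k - wt K c.2.1.1) * yI ^ wt K c.2.1.1 * xP ^ (r - wt K c.2.1.2)
        * yP ^ wt K c.2.1.2) * B c.2.2 j := by
  simp only [mul_apply, IPWAM, Finset.sum_filter, Finset.mul_sum, Finset.sum_mul, mul_ite, ite_mul,
    mul_zero, zero_mul, Fintype.sum_prod_type]
  rw [Finset.sum_comm]
  refine Finset.sum_congr rfl fun _ _ => ?_
  rw [Finset.sum_comm]
  exact Finset.sum_congr rfl fun _ _ => Finset.sum_comm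

lemma sum_addChar_twistedPairing_mul_monomial [Fintype K] {ψ : AddChar K ℂ}
    (hψ : ψ.IsPrimitive) (w w' : Fin m → K) (c : ConstraintSpace K m k r) (X₁ Y₁ X₂ Y₂ : ℂ) :
    ∑ pv : (Fin k → K) × (Fin r → K), ψ (twistedPairing (w, pv, w') c)
        * (X₁ ^ (k - wt K pv.1) * Y₁ ^ wt K pv.1 * X₂ ^ (r - wt K pv.2) * Y₂ ^ wt K pv.2)
      = ψ (w ⬝ᵥ c.1) * ((X₁ + ((Fintype.card K : ℂ) - 1) * Y₁) ^ (k - wt K c.2.1.1)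
          * (X₁ - Y₁) ^ wt K c.2.1.1 * (X₂ + ((Fintype.card K : ℂ) - 1) * Y₂) ^ (r - wt K c.2.1.2)
          * (X₂ - Y₂) ^ wt K c.2.1.2) * ψ (-(w' ⬝ᵥ c.2.2)) := by
  simp only [mul_assoc, ← sum_addChar_dotProduct_mul_pow_wt hψ, Finset.mul_sum, Finset.sum_mul,
    Fintype.sum_prod_type]
  refine Finset.sum_congr rfl fun v₁ _ => Finset.sum_congr rfl fun v₂ _ => ?_
  simp only [twistedPairing, LinearMap.coe_mk, AddHom.coe_mk, sub_eq_add_neg,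
    AddChar.map_add_eq_mul]
  ring

def fourierMatrix (ψ : AddChar K ℂ) (m : ℕ) : Matrix (Fin m → K) (Fin m → K) ℂ :=
  fun a b => ψ (a ⬝ᵥ b)

lemma conjTranspose_fourierMatrix_apply [Fintype K] (ψ : AddChar K ℂ) (a b : Fin m → K) :
    (fourierMatrix ψ m)ᴴ a b = ψ (-(b ⬝ᵥ a)) := by
  rw [conjTranspose_apply, AddChar.map_neg_eq_conj]
  rfl

theorem macWilliams_IPWAM_twistedDual [Fintype K] {ψ : AddChar K ℂ} (hψ : ψ.IsPrimitive)
    (C : Submodule K (ConstraintSpace K m k r)) (xI yI xP yP : ℂ) :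
    (Fintype.card K : ℂ) ^ Module.finrank K C •
        IPWAM K (twistedDual K (C : Set (ConstraintSpace K m k r))) xP yP xI yI
      = fourierMatrix ψ m * IPWAM K (C : Set (ConstraintSpace K m k r))
          (xP + ((Fintype.card K : ℂ) - 1) * yP) (xP - yP)
          (xI + ((Fintype.card K : ℂ) - 1) * yI) (xI - yI) * (fourierMatrix ψ m)ᴴ := by
  ext w w'
  rw [Matrix.smul_apply, smul_eq_mul, mul_IPWAM_mul_apply]
  simp only [SetLike.mem_coe]
  have horth : ∀ pv : (Fin k → K) × (Fin r → K),
      ∑ c ∈ Finset.univ.filter (· ∈ C), ψ (twistedPairing (w, pv, w') c)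
        = if (w, pv, w') ∈ twistedDual K (C : Set (ConstraintSpace K m k r))
          then (Fintype.card K : ℂ) ^ Module.finrank K C else 0 := by
    intro pv
    rw [sum_addChar_linearMap_submodule hψ]
    exact if_congr (mem_twistedDual_iff _ _).symm rfl rfl
  calc _ = ∑ pv : (Fin k → K) × (Fin r → K),
          (∑ c ∈ Finset.univ.filter (· ∈ C), ψ (twistedPairing (w, pv, w') c))
            * (xP ^ (k - wt K pv.1) * yP ^ wt K pv.1 * xI ^ (r - wt K pv.2) * yI ^ wt K pv.2) := by
        simp only [IPWAM, Finset.mul_sum, horth, ite_mul, zero_mul, mul_ite, mul_zero]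
    _ = _ := by
        simp only [Finset.sum_mul]
        rw [Finset.sum_comm]
        refine Finset.sum_congr rfl fun c _ => ?_
        rw [conjTranspose_fourierMatrix_apply]
        exact sum_addChar_twistedPairing_mul_monomial hψ w w' c _ _ _ _

end ConstraintCodes

def traceChar : AddChar F ℂ :=
  ZMod.stdAddChar.compAddMonoidHom (Algebra.trace (ZMod p) F).toAddMonoidHom

lemma traceChar_isPrimitive : (traceChar p F).IsPrimitive := by
  refine AddChar.IsPrimitive.of_ne_one (AddChar.ne_one_iff.2 ?_)
  obtain ⟨x, hx⟩ := Algebra.trace_surjective (ZMod p) F 1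
  refine ⟨x, fun h => one_ne_zero (ZMod.injective_stdAddChar ?_ : (1 : ZMod p) = 0)⟩
  simpa [traceChar, hx] using h

lemma FourierMat_eq_fourierMatrix {K : Type} [Field K] [Algebra (ZMod p) K] (m : ℕ) :
    FourierMat p K m = fourierMatrix (traceChar p K) m := by
  ext a b
  rw [FourierMat, fourierMatrix, traceChar, AddChar.compAddMonoidHom_apply, ZMod.stdAddChar_apply,
    ZMod.toCircle_apply, ← Complex.exp_nat_mul, LinearMap.toAddMonoidHom_coe, dotProduct]
  congr 1
  ring

theorem stmt7 (m n k : ℕ)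
    (C : Submodule F ((Fin m → F) × ((Fin k → F) × (Fin (n - k) → F)) × (Fin m → F)))
    (hC : Module.finrank F C = m + k) (xI yI xP yP : ℂ) :
    -- `Λ_Ĉ(x_I,y_I,x_P,y_P)`: for the dual, the first block is the parity
    -- block and the second block is the information block.
    (IPWAM F (twistedDual F
        (C : Set ((Fin m → F) × ((Fin k → F) × (Fin (n - k) → F)) × (Fin m → F))))
        xP yP xI yI)
      = ((Fintype.card F : ℂ) ^ (m + k))⁻¹ •
          (FourierMat p F m *
            IPWAM F (C : Set ((Fin m → F) × ((Fin k → F) × (Fin (n - k) → F)) × (Fin m → F)))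
              (xP + ((Fintype.card F : ℂ) - 1) * yP) (xP - yP)
              (xI + ((Fintype.card F : ℂ) - 1) * yI) (xI - yI) *
            (FourierMat p F m)ᴴ) := by
  rw [FourierMat_eq_fourierMatrix, ← macWilliams_IPWAM_twistedDual (traceChar_isPrimitive p F), hC,
    smul_smul, inv_mul_cancel₀ (by simp), one_smul]
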